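/- Let G be a directed graph on N vertices with adjacency matrix A. For all distinct vertices i, j, the number of Hamiltonian paths from i to j equals ∑_{D ∈ 𝒟} (−1)^{N−|D|} ((A_D)^{N−1})_{ij}, where 𝒟 is the collection of weakly connected dominating subsets D of V (i.e., D weakly connected with D ∪ N(D) = V). -/

import Mathlib

open scoped Classical

/-- Restriction of a matrix to a subset of indices (zero outside `S × S`). -/
def restrict {N : ℕ} {R : Type} [Zero R] (M : Matrix (Fin N) (Fin N) R) (S : Finset (Fin N)) :
    Matrix (Fin N) (Fin N) R :=
  fun i j => if i ∈ S ∧ j ∈ S then M i j else 0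

/-- The subgraph induced by `C` is weakly connected. -/
def WConn {N : ℕ} (E : Fin N → Fin N → Prop) (C : Finset (Fin N)) : Prop :=
  ∀ i ∈ C, ∀ j ∈ C,
    Relation.ReflTransGen (fun a b => a ∈ C ∧ b ∈ C ∧ (E a b ∨ E b a)) i j

/-- The weak neighborhood of `C`: vertices outside `C` with an edge to or from `C`. -/
noncomputable def wNbhd {N : ℕ} (E : Fin N → Fin N → Prop) (C : Finset (Fin N)) :
    Finset (Fin N) :=
  Finset.univ.filter (fun i => i ∉ C ∧ ∃ j ∈ C, E i j ∨ E j i)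

/-!
Expanding `((A_D)^(N-1))_{ij}` as the number of walks from `i` to `j` inside `D` and exchanging
the sums, each walk contributes the alternating sum of `(-1)^(N-|D|)` over the weakly connected
dominating `D` containing its vertex set `S`. The alternating sum over *all* `D ⊇ S` regroups, by
the weak component `C` of `S` in `D`, into alternating sums over the subsets of
`V ∖ (C ∪ N(C))`, which vanish unless `C` is dominating. Hence both sums agree, and they equal
`[S = V]`. Walks of length `N - 1` through all `N` vertices are the Hamiltonian paths.
-/

open Finset Relation

theorem Matrix.pow_apply_eq_sum_prod {ι R : Type*} [Fintype ι] [DecidableEq ι] [CommSemiring R]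
    (M : Matrix ι ι R) (k : ℕ) (i j : ι) :
    (M ^ k) i j = ∑ w : Fin (k + 1) → ι with w 0 = i ∧ w (Fin.last k) = j,
      ∏ m : Fin k, M (w m.castSucc) (w m.succ) := by
  rw [sum_filter]
  induction k generalizing i with
  | zero =>
    rw [← (Equiv.funUnique (Fin 1) ι).symm.sum_comp]
    simp [Matrix.one_apply, ite_and]
  | succ k ih =>
    rw [← (Fin.consEquiv fun _ => ι).sum_comp, Fintype.sum_prod_type]
    simp only [Fin.consEquiv_apply, Fin.cons_zero, ← Fin.succ_last, Fin.cons_succ,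
      Fin.prod_univ_succ, Fin.castSucc_zero, ← Fin.succ_castSucc]
    simp only [pow_succ', Matrix.mul_apply, ih, ite_and, mul_sum, mul_ite, mul_zero, sum_ite_irrel,
      sum_const_zero, sum_ite_eq', mem_univ, if_true]
    rw [sum_comm]
    simp

theorem image_univ_subset_iff_forall_castSucc_succ_mem {α : Type*} [DecidableEq α] {k : ℕ}
    (hk : 0 < k) (w : Fin (k + 1) → α) (D : Finset α) :
    univ.image w ⊆ D ↔ ∀ m : Fin k, w m.castSucc ∈ D ∧ w m.succ ∈ D := by
  obtain ⟨k, rfl⟩ := Nat.exists_eq_succ_of_ne_zero hk.ne'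
  simp only [image_subset_iff, mem_univ, forall_const]
  refine ⟨fun h m => ⟨h _, h _⟩, fun h a => ?_⟩
  induction a using Fin.lastCases with
  | last => simpa using (h (Fin.last k)).2
  | cast b => exact (h b).1

theorem sum_superset_neg_one_pow_card {α : Type*} [Fintype α] [DecidableEq α] (S : Finset α) :
    ∑ D ∈ univ.powerset.filter (S ⊆ ·), (-1 : ℤ) ^ #D =
      if S = univ then (-1) ^ Fintype.card α else 0 := by
  have hIcc : univ.powerset.filter (S ⊆ ·) = Icc S univ := by ext; simp
  have hdisj : ∀ X ∈ Sᶜ.powerset, Disjoint S X := fun X hX =>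
    disjoint_right.2 fun _ ha => mem_compl.1 (mem_powerset.1 hX ha)
  rw [hIcc, Icc_eq_image_powerset (subset_univ S), ← compl_eq_univ_sdiff, sum_image
    fun X hX Y hY h => by
      rw [← union_sdiff_cancel_left (hdisj X hX), h, union_sdiff_cancel_left (hdisj Y hY)]]
  rw [sum_congr rfl fun X hX => by rw [card_union_of_disjoint (hdisj X hX), pow_add], ← mul_sum,
    sum_powerset_neg_one_pow_card]
  simp_rw [compl_eq_empty_iff, mul_ite, mul_one, mul_zero]
  split_ifs with h
  · rw [h, card_univ]
  · rfl

section Components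

variable {N : ℕ} {E : Fin N → Fin N → Prop}

/-- `WConn E D` unfolds to connectivity of `D` under `ReflTransGen (wStep E D)`. -/
def wStep (E : Fin N → Fin N → Prop) (D : Finset (Fin N)) (a b : Fin N) : Prop :=
  a ∈ D ∧ b ∈ D ∧ (E a b ∨ E b a)

instance (D : Finset (Fin N)) : Std.Symm (wStep E D) :=
  ⟨fun _ _ ⟨ha, hb, he⟩ => ⟨hb, ha, he.symm⟩⟩

theorem wStep_mono {D D' : Finset (Fin N)} (h : D ⊆ D') : wStep E D ≤ wStep E D' :=
  fun _ _ hab => ⟨h hab.1, h hab.2.1, hab.2.2⟩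

theorem wConn_of_forall_reflTransGen {C : Finset (Fin N)} {s : Fin N}
    (h : ∀ v ∈ C, ReflTransGen (wStep E C) s v) : WConn E C :=
  fun u hu v hv => (Std.Symm.symm _ _ (h u hu)).trans (h v hv)

noncomputable def wComponent (E : Fin N → Fin N → Prop) (s : Fin N) (D : Finset (Fin N)) :
    Finset (Fin N) :=
  D.filter (ReflTransGen (wStep E D) s)

variable {s : Fin N} {D : Finset (Fin N)}

theorem mem_wComponent {v : Fin N} :
    v ∈ wComponent E s D ↔ v ∈ D ∧ ReflTransGen (wStep E D) s v :=
  mem_filter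

theorem wComponent_subset : wComponent E s D ⊆ D :=
  filter_subset _ _

theorem reflTransGen_wStep_wComponent {v : Fin N} (h : ReflTransGen (wStep E D) s v) :
    ReflTransGen (wStep E (wComponent E s D)) s v := by
  induction h with
  | refl => exact .refl
  | tail hsb hbc ih =>
    exact ih.tail ⟨mem_wComponent.2 ⟨hbc.1, hsb⟩, mem_wComponent.2 ⟨hbc.2.1, hsb.tail hbc⟩, hbc.2.2⟩

theorem wConn_wComponent : WConn E (wComponent E s D) :=
  wConn_of_forall_reflTransGen fun _ hv => reflTransGen_wStep_wComponent (mem_wComponent.1 hv).2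

theorem subset_wComponent {S : Finset (Fin N)} (hs : s ∈ S) (hS : WConn E S) (hSD : S ⊆ D) :
    S ⊆ wComponent E s D :=
  fun v hv => mem_wComponent.2 ⟨hSD hv, ReflTransGen.mono (wStep_mono hSD) _ _ (hS s hs v hv)⟩

theorem disjoint_sdiff_wComponent :
    Disjoint (D \ wComponent E s D) (wComponent E s D ∪ wNbhd E (wComponent E s D)) := by
  refine disjoint_left.2 fun v hv hv' => (mem_sdiff.1 hv).2 ?_
  obtain hvC | hvN := mem_union.1 hv'
  · exact hvC
  · obtain ⟨-, u, hu, he⟩ := (mem_filter.1 hvN).2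
    exact mem_wComponent.2 ⟨(mem_sdiff.1 hv).1,
      (mem_wComponent.1 hu).2.tail ⟨(mem_wComponent.1 hu).1, (mem_sdiff.1 hv).1, he.symm⟩⟩

theorem wComponent_union_of_disjoint {C R : Finset (Fin N)} (hs : s ∈ C) (hC : WConn E C)
    (hR : Disjoint R (C ∪ wNbhd E C)) : wComponent E s (C ∪ R) = C := by
  refine Subset.antisymm (fun v hv => ?_) (subset_wComponent hs hC subset_union_left)
  replace hv := (mem_wComponent.1 hv).2
  induction hv with
  | refl => exact hs
  | @tail b c _ hbc hb =>
    by_contra hc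
    have hcN : c ∈ wNbhd E C := mem_filter.2 ⟨mem_univ c, hc, b, hb, hbc.2.2.symm⟩
    have hcR : c ∈ R := (mem_union.1 hbc.2.1).resolve_left hc
    exact disjoint_left.1 hR hcR (mem_union_right C hcN)

/-- Splitting `D ⊇ S` into the weak component `C` of `s ∈ S` in `D` and the rest `R`, which must
avoid `C` and its weak neighbourhood. -/
theorem sum_superset_eq_sum_wConn {S : Finset (Fin N)} (hs : s ∈ S) (hS : WConn E S) :
    ∑ D ∈ univ.powerset.filter (S ⊆ ·), (-1 : ℤ) ^ #D =
      ∑ C ∈ univ.powerset.filter (fun C => WConn E C ∧ S ⊆ C),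
        (-1) ^ #C * ∑ R ∈ (C ∪ wNbhd E C)ᶜ.powerset, (-1) ^ #R := by
  simp_rw [mul_sum, ← pow_add]
  rw [sum_sigma']
  symm
  refine sum_nbij' (fun p => p.1 ∪ p.2) (fun D => ⟨wComponent E s D, D \ wComponent E s D⟩)
    ?_ ?_ ?_ ?_ ?_
  · rintro ⟨C, R⟩ h
    simp only [mem_sigma, mem_filter, mem_powerset] at h ⊢
    exact ⟨subset_univ _, h.1.2.2.trans subset_union_left⟩
  · intro D hD
    simp only [mem_sigma, mem_filter, mem_powerset] at hD ⊢
    exact ⟨⟨subset_univ _, wConn_wComponent, subset_wComponent hs hS hD.2⟩,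
      subset_compl_iff_disjoint_right.2 disjoint_sdiff_wComponent⟩
  · rintro ⟨C, R⟩ h
    simp only [mem_sigma, mem_filter, mem_powerset, subset_compl_iff_disjoint_right] at h
    rw [wComponent_union_of_disjoint (h.1.2.2 hs) h.1.2.1 h.2,
      union_sdiff_cancel_left (disjoint_union_right.1 h.2).1.symm]
  · intro D _
    exact union_sdiff_of_subset wComponent_subset
  · rintro ⟨C, R⟩ h
    simp only [mem_sigma, mem_filter, mem_powerset, subset_compl_iff_disjoint_right] at h
    rw [card_union_of_disjoint (disjoint_union_right.1 h.2).1.symm]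

theorem sum_wConn_dominating_superset {S : Finset (Fin N)} (hS : S.Nonempty) (hSC : WConn E S) :
    ∑ D ∈ univ.powerset.filter (fun D => (WConn E D ∧ D ∪ wNbhd E D = univ) ∧ S ⊆ D),
      (-1 : ℤ) ^ (N - #D) = if S = univ then 1 else 0 := by
  obtain ⟨s, hs⟩ := hS
  have hsign : ∀ D : Finset (Fin N), (-1 : ℤ) ^ (N - #D) = (-1) ^ N * (-1) ^ #D := fun D => by
    have hle : #D ≤ N := card_le_univ D |>.trans_eq (Fintype.card_fin N)
    rw [← pow_add, show N + #D = N - #D + 2 * #D by omega, pow_add, pow_mul, neg_one_sq, one_pow,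
      mul_one]
  have hdom : ∀ C : Finset (Fin N), (-1 : ℤ) ^ #C * ∑ R ∈ (C ∪ wNbhd E C)ᶜ.powerset, (-1) ^ #R =
      if C ∪ wNbhd E C = univ then (-1) ^ #C else 0 := fun C => by
    simp_rw [sum_powerset_neg_one_pow_card, compl_eq_empty_iff, mul_ite, mul_one, mul_zero]
  have hfilter : univ.powerset.filter (fun D => (WConn E D ∧ D ∪ wNbhd E D = univ) ∧ S ⊆ D) =
      (univ.powerset.filter fun C => WConn E C ∧ S ⊆ C).filter fun C => C ∪ wNbhd E C = univ := by
    rw [filter_filter]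
    exact filter_congr fun _ _ => and_right_comm
  simp_rw [hsign]
  rw [← mul_sum, hfilter, sum_filter, ← sum_congr rfl fun C _ => hdom C,
    ← sum_superset_eq_sum_wConn hs hSC, sum_superset_neg_one_pow_card, Fintype.card_fin, mul_ite,
    mul_zero, ← pow_add, ← two_mul, pow_mul, neg_one_sq, one_pow]

end Components

section Walks

variable {N : ℕ} {E : Fin N → Fin N → Prop}

noncomputable def walks (E : Fin N → Fin N → Prop) (k : ℕ) (i j : Fin N) :
    Finset (Fin (k + 1) → Fin N) :=
  univ.filter fun w => w 0 = i ∧ w (Fin.last k) = j ∧ ∀ m : Fin k, E (w m.castSucc) (w m.succ)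

theorem restrict_pow_apply {A : Matrix (Fin N) (Fin N) ℤ}
    (hA : ∀ a b, A a b = if E a b then 1 else 0) {k : ℕ} (hk : 0 < k) (D : Finset (Fin N))
    (i j : Fin N) :
    (restrict A D ^ k) i j = ∑ w ∈ walks E k i j, if univ.image w ⊆ D then 1 else 0 := by
  have hentry : ∀ a b, restrict A D a b = if a ∈ D ∧ b ∈ D ∧ E a b then 1 else 0 := by
    intro a b
    simp only [_root_.restrict, hA]
    split_ifs <;> tauto
  simp_rw [Matrix.pow_apply_eq_sum_prod, hentry, Fintype.prod_boole, walks, sum_filter, ← ite_and]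
  refine sum_congr rfl fun w _ => ?_
  simp only [image_univ_subset_iff_forall_castSucc_succ_mem hk]
  congr 1
  simp only [eq_iff_iff, forall_and]
  tauto

theorem wConn_image_of_forall_adj {k : ℕ} {w : Fin (k + 1) → Fin N}
    (hw : ∀ m : Fin k, E (w m.castSucc) (w m.succ)) : WConn E (univ.image w) := by
  refine wConn_of_forall_reflTransGen (s := w 0) ?_
  simp only [forall_mem_image, mem_univ, forall_const]
  intro a
  induction a using Fin.induction with
  | zero => exact .refl
  | succ m ih =>
    exact ih.tail ⟨mem_image_of_mem _ (mem_univ _), mem_image_of_mem _ (mem_univ _), .inl (hw m)⟩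

theorem natCard_hamiltonian_eq_card_walks {n : ℕ} (E : Fin (n + 1) → Fin (n + 1) → Prop)
    (i j : Fin (n + 1)) :
    Nat.card {w : Fin (n + 1) → Fin (n + 1) //
        Function.Bijective w ∧ w 0 = i ∧ w (Fin.last n) = j ∧
        ∀ m : Fin n, E (w m.castSucc) (w m.succ)} =
      #{w ∈ walks E n i j | univ.image w = univ} := by
  rw [Nat.card_eq_fintype_card, Fintype.card_subtype, walks, filter_filter]
  refine congrArg card (filter_congr fun w _ => ?_)
  simp only [← Finite.surjective_iff_bijective, Function.Surjective, eq_univ_iff_forall, mem_image,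
    mem_univ, true_and]
  exact and_comm

end Walks

theorem stmt11 (n : ℕ) (E : Fin (n + 1) → Fin (n + 1) → Prop)
    (A : Matrix (Fin (n + 1)) (Fin (n + 1)) ℤ)
    (hA : ∀ i j, A i j = if E i j then 1 else 0)
    (i j : Fin (n + 1)) (hij : i ≠ j) :
    (Nat.card {w : Fin (n + 1) → Fin (n + 1) //
        Function.Bijective w ∧ w 0 = i ∧ w (Fin.last n) = j ∧
        ∀ m : Fin n, E (w m.castSucc) (w m.succ)} : ℤ)
      = ∑ D ∈ Finset.univ.powerset.filter
            (fun D : Finset (Fin (n + 1)) =>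
              WConn E D ∧ D ∪ wNbhd E D = Finset.univ),
          (-1) ^ (n + 1 - D.card) * (restrict A D ^ n) i j := by
  have hn : 0 < n := Nat.pos_of_ne_zero fun h => by
    subst h
    exact hij (Subsingleton.elim (α := Fin 1) i j)
  rw [natCard_hamiltonian_eq_card_walks, natCast_card_filter]
  simp_rw [restrict_pow_apply hA hn, mul_sum, mul_boole]
  rw [sum_comm]
  refine sum_congr rfl fun w hw => ?_
  rw [← sum_filter, filter_filter]
  exact (sum_wConn_dominating_superset ⟨w 0, mem_image_of_mem w (mem_univ 0)⟩
    (wConn_image_of_forall_adj (mem_filter.1 hw).2.2.2)).symm
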